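/- The quantum W1 norm is non-increasing under quantum channels acting on a single qudit and invariant under permutations of the qudits: for any i ∈ [n], any quantum channel (completely positive trace-preserving map) Φ_i on the i-th qudit, and any X ∈ O_n^T, one has ‖(Φ_i ⊗ id)(X)‖_{W1} ≤ ‖X‖_{W1}, with equality when Φ_i is a unitary conjugation; and for any permutation π of [n], the operator X^π obtained by permuting the tensor factors of X according to π satisfies ‖X^π‖_{W1} = ‖X‖_{W1}. -/

import Mathlib

open scoped BigOperators
open scoped Classical
open scoped ComplexOrder

noncomputable section

namespace QW1

/-- Configurations of `n` qudits of local dimension `d`: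
the index set of the canonical basis of `(ℂ^d)^{⊗ n}`. -/
abbrev Cfg (d n : ℕ) : Type := Fin n → Fin d

/-- Linear operators on the Hilbert space of `n` qudits, represented as matrices
in the canonical basis. -/
abbrev Mat (d n : ℕ) : Type := Matrix (Cfg d n) (Cfg d n) ℂ

/-- The trace norm `‖A‖₁ = Tr √(Aᴴ A)`. -/
noncomputable def traceNorm {ι : Type} [Fintype ι] [DecidableEq ι] (A : Matrix ι ι ℂ) : ℝ :=
  (((Matrix.posSemidef_conjTranspose_mul_self A).1.eigenvectorUnitary : Matrix ι ι ℂ) *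
    Matrix.diagonal ((fun x : ℝ => (x : ℂ)) ∘ Real.sqrt ∘ (Matrix.posSemidef_conjTranspose_mul_self A).1.eigenvalues) *
    (star ((Matrix.posSemidef_conjTranspose_mul_self A).1.eigenvectorUnitary : Matrix ι ι ℂ))).trace.re

/-- The operator norm `‖A‖_∞`. -/
noncomputable def opNorm {ι : Type} [Fintype ι] [DecidableEq ι] (A : Matrix ι ι ℂ) : ℝ :=
  ‖Matrix.toEuclideanCLM (𝕜 := ℂ) A‖

/-- Quantum states: positive semidefinite operators with unit trace. -/
def IsState {ι : Type} [Fintype ι] (ρ : Matrix ι ι ℂ) : Prop :=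
  ρ.PosSemidef ∧ ρ.trace = 1

/-- Insert the value `s` at position `i` into a configuration `a` of the remaining qudits. -/
def ins {d n : ℕ} (i : Fin n) (a : {j : Fin n // j ≠ i} → Fin d) (s : Fin d) : Cfg d n :=
  fun j => if h : j = i then s else a ⟨j, h⟩

/-- The partial trace over the `i`-th qudit. -/
noncomputable def ptrace {d n : ℕ} (i : Fin n) (X : Mat d n) :
    Matrix ({j : Fin n // j ≠ i} → Fin d) ({j : Fin n // j ≠ i} → Fin d) ℂ :=
  fun a b => ∑ s : Fin d, X (ins i a s) (ins i b s)

/-- The marginal of `ρ` on the `i`-th qudit (partial trace over all the other qudits). -/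
noncomputable def marginal {d n : ℕ} (i : Fin n) (ρ : Mat d n) :
    Matrix (Fin d) (Fin d) ℂ :=
  fun s t => ∑ a : ({j : Fin n // j ≠ i} → Fin d), ρ (ins i a s) (ins i a t)

/-- Combine a configuration `s` of the qudits in `I` with a configuration `a` of the rest. -/
def insSet {d n : ℕ} (I : Finset (Fin n)) (a : {j : Fin n // j ∉ I} → Fin d)
    (s : {j : Fin n // j ∈ I} → Fin d) : Cfg d n :=
  fun j => if h : j ∈ I then s ⟨j, h⟩ else a ⟨j, h⟩

/-- The partial trace over the qudits in `I`. -/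
noncomputable def ptraceSet {d n : ℕ} (I : Finset (Fin n)) (X : Mat d n) :
    Matrix ({j : Fin n // j ∉ I} → Fin d) ({j : Fin n // j ∉ I} → Fin d) ℂ :=
  fun a b => ∑ s : ({j : Fin n // j ∈ I} → Fin d), X (insSet I a s) (insSet I b s)

/-- The set of values `(1/2) ∑ i ‖X⁽ⁱ⁾‖₁` over all decompositions `X = ∑ i X⁽ⁱ⁾` with
`X⁽ⁱ⁾` self-adjoint and `Tr_i X⁽ⁱ⁾ = 0`. -/
def W1Set {d n : ℕ} (X : Mat d n) : Set ℝ :=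
  { r | ∃ Y : Fin n → Mat d n, (∀ i, (Y i).IsHermitian) ∧ (∀ i, ptrace i (Y i) = 0) ∧
      X = ∑ i, Y i ∧ r = (1 / 2) * ∑ i, traceNorm (Y i) }

/-- The quantum `W₁` norm. -/
noncomputable def W1 {d n : ℕ} (X : Mat d n) : ℝ := sInf (W1Set X)

/-- The quantum Lipschitz constant: the dual norm of the quantum `W₁` norm. -/
noncomputable def lipschitz {d n : ℕ} (H : Mat d n) : ℝ :=
  sSup { r | ∃ X : Mat d n, X.IsHermitian ∧ X.trace = 0 ∧ W1 X ≤ 1 ∧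
    r = ((H * X).trace).re }

/-- Extension `Φ ⊗ id_R` of a map on matrices. -/
def extendMap {A B R : Type} [Fintype A] [Fintype B] [Fintype R]
    (Φ : Matrix A A ℂ → Matrix B B ℂ) (M : Matrix (A × R) (A × R) ℂ) :
    Matrix (B × R) (B × R) ℂ :=
  fun p q => Φ (fun a a' => M (a, p.2) (a', q.2)) p.1 q.1

/-- Quantum channels: completely positive trace-preserving linear maps. -/
def IsCPTP {A B : Type} [Fintype A] [Fintype B]
    (Φ : Matrix A A ℂ →ₗ[ℂ] Matrix B B ℂ) : Prop :=
  (∀ (k : ℕ) (M : Matrix (A × Fin k) (A × Fin k) ℂ), M.PosSemidef →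
    (extendMap (fun N => Φ N) M).PosSemidef) ∧
  ∀ M, (Φ M).trace = M.trace

/-- Action `φ_i ⊗ id` of a single-qudit map `φ` on the `i`-th qudit of `n` qudits. -/
def applyAt {d n : ℕ} (i : Fin n) (φ : Matrix (Fin d) (Fin d) ℂ → Matrix (Fin d) (Fin d) ℂ)
    (X : Mat d n) : Mat d n :=
  fun a b => φ (fun s t => X (Function.update a i s) (Function.update b i t)) (a i) (b i)

/-- Action `φ_I ⊗ id` of a map `φ` on the qudits in `I`. -/
def applyOn {d n : ℕ} (I : Finset (Fin n))
    (φ : Matrix ({j : Fin n // j ∈ I} → Fin d) ({j : Fin n // j ∈ I} → Fin d) ℂ →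
         Matrix ({j : Fin n // j ∈ I} → Fin d) ({j : Fin n // j ∈ I} → Fin d) ℂ)
    (X : Mat d n) : Mat d n :=
  fun a b =>
    φ (fun s t => X (insSet I (fun j => a j) s) (insSet I (fun j => b j) t))
      (fun j => a j) (fun j => b j)

/-- The operator obtained from `X` by permuting the tensor factors according to `π`. -/
def permuteMat {d n : ℕ} (π : Equiv.Perm (Fin n)) (X : Mat d n) : Mat d n :=
  fun a b => X (a ∘ π) (b ∘ π)

/-- Tensor product of an operator on the first `m` qudits with one on the last `n` qudits. -/
def tensorMN {d m n : ℕ} (A : Mat d m) (B : Mat d n) : Mat d (m + n) :=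
  fun a b =>
    A (fun i => a (Fin.castAdd n i)) (fun i => b (Fin.castAdd n i)) *
    B (fun j => a (Fin.natAdd m j)) (fun j => b (Fin.natAdd m j))

/-- Partial trace of an operator on `m + n` qudits over the last `n` qudits. -/
noncomputable def ptraceLast {d m n : ℕ} (X : Mat d (m + n)) : Mat d m :=
  fun a b => ∑ k : Cfg d n, X (Fin.append a k) (Fin.append b k)

/-- Partial trace of an operator on `m + n` qudits over the first `m` qudits. -/
noncomputable def ptraceFirst {d m n : ℕ} (X : Mat d (m + n)) : Mat d n :=
  fun a b => ∑ k : Cfg d m, X (Fin.append k a) (Fin.append k b)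

/-- `n`-fold tensor product `σ₁ ⊗ ⋯ ⊗ σₙ` of single-qudit operators. -/
def tensorAll {d n : ℕ} (σs : Fin n → Matrix (Fin d) (Fin d) ℂ) : Mat d n :=
  fun a b => ∏ i, σs i (a i) (b i)

/-- `I_d^{(i)} ⊗ K`: the identity on the `i`-th qudit tensored with an operator `K`
on the remaining qudits. -/
def idTensorAt {d n : ℕ} (i : Fin n)
    (K : Matrix ({j : Fin n // j ≠ i} → Fin d) ({j : Fin n // j ≠ i} → Fin d) ℂ) :
    Mat d n :=
  fun a b => if a i = b i then K (fun j => a j) (fun j => b j) else 0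

/-- `K ⊗ identity`: an operator acting only on the qudits in `I`. -/
def embedOn {d n : ℕ} (I : Finset (Fin n))
    (K : Matrix ({j : Fin n // j ∈ I} → Fin d) ({j : Fin n // j ∈ I} → Fin d) ℂ) :
    Mat d n :=
  fun a b => if (∀ j, j ∉ I → a j = b j) then K (fun j => a j) (fun j => b j) else 0

/-- The `n`-th tensor power `φ^{⊗n}` of a single-qudit linear map `φ`. -/
noncomputable def tensorPowMap {d n : ℕ}
    (φ : Matrix (Fin d) (Fin d) ℂ → Matrix (Fin d) (Fin d) ℂ) (X : Mat d n) : Mat d n :=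
  fun a b => ∑ s : Cfg d n, ∑ t : Cfg d n,
    X s t * ∏ j, φ (Matrix.single (s j) (t j) 1) (a j) (b j)

/-- The `1 → 1` norm of a map on single-qudit operators. -/
noncomputable def norm1to1 {d : ℕ}
    (F : Matrix (Fin d) (Fin d) ℂ → Matrix (Fin d) (Fin d) ℂ) : ℝ :=
  sSup { r | ∃ ρ : Matrix (Fin d) (Fin d) ℂ, IsState ρ ∧ r = traceNorm (F ρ) }

/-- The diamond norm of a map on single-qudit operators. -/
noncomputable def diamondNorm {d : ℕ}
    (F : Matrix (Fin d) (Fin d) ℂ → Matrix (Fin d) (Fin d) ℂ) : ℝ :=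
  sSup { r | ∃ ρ : Matrix (Fin d × Fin d) (Fin d × Fin d) ℂ, IsState ρ ∧
    r = traceNorm (extendMap F ρ) }

/-- The contraction coefficient (`W₁ → W₁` norm) of a map on `n`-qudit operators. -/
noncomputable def W1toW1 {d n : ℕ} (Φ : Mat d n → Mat d n) : ℝ :=
  sSup { r | ∃ X : Mat d n, X.IsHermitian ∧ X.trace = 0 ∧ W1 X ≤ 1 ∧ r = W1 (Φ X) }

/-- The von Neumann entropy `S(ρ) = -Tr[ρ ln ρ]` (natural logarithm). -/
noncomputable def vnEntropy {ι : Type} [Fintype ι] [DecidableEq ι] (ρ : Matrix ι ι ℂ) : ℝ :=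
  if h : ρ.IsHermitian then -∑ i, h.eigenvalues i * Real.log (h.eigenvalues i) else 0

/-- The logarithm of a self-adjoint matrix, via the spectral decomposition. -/
noncomputable def matLog {ι : Type} [Fintype ι] [DecidableEq ι] (ρ : Matrix ι ι ℂ) :
    Matrix ι ι ℂ :=
  if h : ρ.IsHermitian then
    (h.eigenvectorUnitary : Matrix ι ι ℂ) *
      Matrix.diagonal (fun i => (Real.log (h.eigenvalues i) : ℂ)) *
      (star (h.eigenvectorUnitary : Matrix ι ι ℂ))
  else 0

/-- The quantum relative entropy `S(ρ‖σ) = Tr[ρ (ln ρ - ln σ)]`. -/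
noncomputable def relEntropy {ι : Type} [Fintype ι] [DecidableEq ι]
    (ρ σ : Matrix ι ι ℂ) : ℝ :=
  ((ρ * (matLog ρ - matLog σ)).trace).re

/-- The Hamming distance between two configurations. -/
def hamming {d n : ℕ} (x y : Cfg d n) : ℕ :=
  (Finset.univ.filter (fun i => x i ≠ y i)).card

/-- Probability distributions on a finite set. -/
def IsProb {α : Type} [Fintype α] (p : α → ℝ) : Prop :=
  (∀ x, 0 ≤ p x) ∧ ∑ x, p x = 1

/-- Couplings of two probability distributions. -/
def IsCoupling {α : Type} [Fintype α] (π : α × α → ℝ) (p q : α → ℝ) : Prop :=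
  IsProb π ∧ (∀ x, ∑ y, π (x, y) = p x) ∧ (∀ y, ∑ x, π (x, y) = q y)

/-- The classical Wasserstein distance of order 1 with respect to the Hamming distance. -/
noncomputable def classicalW1 {d n : ℕ} (p q : Cfg d n → ℝ) : ℝ :=
  sInf { c | ∃ π : Cfg d n × Cfg d n → ℝ, IsCoupling π p q ∧
    c = ∑ x : Cfg d n, ∑ y : Cfg d n, (hamming x y : ℝ) * π (x, y) }

/-- The Lipschitz constant of a function on `[d]^n` with respect to the Hamming distance. -/
noncomputable def classicalLip {d n : ℕ} (f : Cfg d n → ℝ) : ℝ :=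
  sSup { r | ∃ x y : Cfg d n, x ≠ y ∧ r = |f x - f y| / (hamming x y : ℝ) }

/-!
All three claims are proved on decompositions `X = ∑ᵢ X⁽ⁱ⁾`. A channel `Φ` on qudit `i` maps a
decomposition of `X` to one of `Φᵢ X`: it preserves hermiticity and trace, so
`Trᵢ Φᵢ X⁽ⁱ⁾ = Trᵢ X⁽ⁱ⁾ = 0`, it commutes with `Tr_j` for `j ≠ i`, and it does not increase the
trace norm of a Hermitian operator: writing it as `P - Q` with `P, Q ≥ 0` and
`‖P - Q‖₁ = Tr P + Tr Q`, one has `‖Φ P - Φ Q‖₁ ≤ Tr Φ P + Tr Φ Q = Tr P + Tr Q`. A unitary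
conjugation has a channel as inverse, which gives equality, and permuting the qudits carries
decompositions of `X` to decompositions of `X^π` with the same summand norms.
Since `W₁` is an infimum, the comparison also needs some decomposition to exist: telescope
`X = ∑ᵢ (Gᵢ - Gᵢ₊₁)`, where `Gₖ` replaces the first `k` qudits by the maximally mixed state.
-/

section TraceNorm

open scoped Matrix MatrixOrder

variable {ι : Type} [Fintype ι] [DecidableEq ι]

lemma traceNorm_eq_re_trace_sqrt (A : Matrix ι ι ℂ) :
    traceNorm A = (CFC.sqrt (Aᴴ * A)).trace.re := by
  have hA := Matrix.posSemidef_conjTranspose_mul_self A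
  rw [CFC.sqrt_eq_real_sqrt _ (Matrix.nonneg_iff_posSemidef.mpr hA), cfcₙ_eq_cfc, hA.1.cfc_eq]
  rfl

lemma traceNorm_eq_of_mul_self_eq {A S : Matrix ι ι ℂ} (hS : S.PosSemidef)
    (h : S * S = Aᴴ * A) : traceNorm A = S.trace.re := by
  rw [traceNorm_eq_re_trace_sqrt, CFC.sqrt_unique h (Matrix.nonneg_iff_posSemidef.mpr hS)]

lemma traceNorm_nonneg (A : Matrix ι ι ℂ) : 0 ≤ traceNorm A := by
  rw [traceNorm_eq_re_trace_sqrt]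
  exact (Complex.nonneg_iff.mp
    (Matrix.nonneg_iff_posSemidef.mp (CFC.sqrt_nonneg _)).trace_nonneg).1

lemma traceNorm_submatrix {κ : Type} [Fintype κ] [DecidableEq κ] (A : Matrix κ κ ℂ)
    (e : ι ≃ κ) : traceNorm (A.submatrix e e) = traceNorm A := by
  set S := CFC.sqrt (Aᴴ * A)
  have hS : S.PosSemidef := Matrix.nonneg_iff_posSemidef.mp (CFC.sqrt_nonneg _)
  rw [traceNorm_eq_re_trace_sqrt A, traceNorm_eq_of_mul_self_eq (S := S.submatrix e e)
    (hS.submatrix e)]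
  · exact congrArg Complex.re (e.sum_comp fun k => S k k)
  · rw [Matrix.submatrix_mul_equiv, CFC.sqrt_mul_sqrt_self _ (Matrix.nonneg_iff_posSemidef.mpr
      (Matrix.posSemidef_conjTranspose_mul_self A)), Matrix.conjTranspose_submatrix,
      Matrix.submatrix_mul_equiv]

lemma traceNorm_eq_re_trace_cfc_abs {A : Matrix ι ι ℂ} (hA : A.IsHermitian) :
    traceNorm A = (cfc (fun x : ℝ => |x|) A).trace.re := by
  refine traceNorm_eq_of_mul_self_eq
    (Matrix.nonneg_iff_posSemidef.mp (cfc_nonneg fun x _ => abs_nonneg x)) ?_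
  rw [← cfc_mul .., hA.eq]
  simp only [abs_mul_abs_self]
  rw [cfc_mul .., cfc_id' ..]

lemma exists_posSemidef_sub_eq_of_isHermitian {A : Matrix ι ι ℂ} (hA : A.IsHermitian) :
    ∃ P Q : Matrix ι ι ℂ, P.PosSemidef ∧ Q.PosSemidef ∧ A = P - Q ∧
      traceNorm A = (P + Q).trace.re := by
  refine ⟨cfc (fun x : ℝ => max x 0) A, cfc (fun x : ℝ => max (-x) 0) A,
    Matrix.nonneg_iff_posSemidef.mp (cfc_nonneg fun x _ => le_max_right _ _),
    Matrix.nonneg_iff_posSemidef.mp (cfc_nonneg fun x _ => le_max_right _ _), ?_, ?_⟩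
  · rw [← cfc_sub ..]
    conv_lhs => rw [← cfc_id' ℝ A]
    simp [max_zero_sub_max_neg_zero_eq_self]
  · rw [traceNorm_eq_re_trace_cfc_abs hA, ← cfc_add ..]
    simp [max_zero_add_max_neg_zero_eq_abs_self]

lemma re_trace_mul_nonneg {M N : Matrix ι ι ℂ} (hM : M.PosSemidef) (hN : N.PosSemidef) :
    0 ≤ (M * N).trace.re := by
  have hN' : 0 ≤ N := Matrix.nonneg_iff_posSemidef.mpr hN
  set R := CFC.sqrt N
  have hR : Rᴴ = R := (CFC.sqrt_nonneg N).isSelfAdjoint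
  have : (M * N).trace = (R * M * Rᴴ).trace := by
    rw [hR, ← CFC.sqrt_mul_sqrt_self N hN', ← Matrix.mul_assoc, Matrix.trace_mul_cycle]
  rw [this]
  exact (Complex.nonneg_iff.mp (hM.mul_mul_conjTranspose_same R).trace_nonneg).1

lemma traceNorm_sub_le {P Q : Matrix ι ι ℂ} (hP : P.PosSemidef) (hQ : Q.PosSemidef) :
    traceNorm (P - Q) ≤ (P + Q).trace.re := by
  have hA : (P - Q).IsHermitian := hP.1.sub hQ.1
  have hcont (f : ℝ → ℝ) : ContinuousOn f (spectrum ℝ (P - Q)) :=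
    Matrix.finite_real_spectrum.continuousOn f
  -- `W` is the sign of `P - Q`: `‖P - Q‖₁ = Tr (W (P - Q))` and `-1 ≤ W ≤ 1`.
  set W := cfc (fun x : ℝ => if 0 ≤ x then (1 : ℝ) else -1) (P - Q)
  have hW : traceNorm (P - Q) = (W * (P - Q)).trace.re := by
    rw [traceNorm_eq_re_trace_cfc_abs hA]
    nth_rw 2 [← cfc_id' ℝ (P - Q)]
    rw [← cfc_mul _ _ _ (hcont _) (hcont _)]
    congr 3
    funext x
    split_ifs with hx
    · simp [abs_of_nonneg hx]
    · simp [abs_of_neg (not_le.mp hx)]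
  have h1 : 0 ≤ ((1 - W) * P).trace.re := by
    refine re_trace_mul_nonneg (Matrix.nonneg_iff_posSemidef.mp ?_) hP
    rw [← cfc_one ℝ (P - Q), ← cfc_sub _ _ _ (hcont _) (hcont _)]
    exact cfc_nonneg fun x _ => by split_ifs <;> norm_num
  have h2 : 0 ≤ ((1 + W) * Q).trace.re := by
    refine re_trace_mul_nonneg (Matrix.nonneg_iff_posSemidef.mp ?_) hQ
    rw [← cfc_one ℝ (P - Q), ← cfc_add _ _ _ (hcont _) (hcont _)]
    exact cfc_nonneg fun x _ => by split_ifs <;> norm_num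
  simp only [hW, Matrix.sub_mul, Matrix.add_mul, Matrix.mul_sub, Matrix.one_mul,
    Matrix.trace_sub, Matrix.trace_add, Complex.sub_re, Complex.add_re] at h1 h2 ⊢
  linarith

end TraceNorm

section Qudits

variable {d n : ℕ}

@[simp] lemma ins_self (i : Fin n) (a : {j : Fin n // j ≠ i} → Fin d) (s : Fin d) :
    ins i a s i = s := by simp [ins]

lemma ins_of_ne (i : Fin n) (a : {j : Fin n // j ≠ i} → Fin d) (s : Fin d) {j : Fin n}
    (h : j ≠ i) : ins i a s j = a ⟨j, h⟩ := by simp [ins, h]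

lemma ins_restrict (i : Fin n) (a : Cfg d n) (s : Fin d) :
    ins i (fun j => a j) s = Function.update a i s := by
  ext j
  by_cases h : j = i
  · subst h; simp
  · simp [ins_of_ne _ _ _ h, h]

@[simp] lemma update_ins (i : Fin n) (a : {j : Fin n // j ≠ i} → Fin d) (s t : Fin d) :
    Function.update (ins i a s) i t = ins i a t := by
  ext j
  by_cases h : j = i
  · subst h; simp
  · simp [ins_of_ne _ _ _ h, h]

lemma update_ins_of_ne {i j : Fin n} (hij : i ≠ j) (a : {k : Fin n // k ≠ j} → Fin d)
    (s u : Fin d) :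
    Function.update (ins j a s) i u = ins j (Function.update a ⟨i, hij⟩ u) s := by
  ext k
  by_cases hkj : k = j
  · subst hkj; simp [Ne.symm hij]
  · by_cases hki : k = i
    · subst hki; simp [ins_of_ne _ _ _ hij]
    · simp [ins_of_ne _ _ _ hkj, hki, Subtype.ext_iff]

lemma funSplitAt_symm_apply (i : Fin n) (p : Fin d × ({j : Fin n // j ≠ i} → Fin d)) :
    (Equiv.funSplitAt i (Fin d)).symm p = ins i p.2 p.1 := by
  ext j
  by_cases h : j = i
  · subst h; simp [Equiv.funSplitAt, Equiv.piSplitAt]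
  · simp [Equiv.funSplitAt, Equiv.piSplitAt, ins_of_ne _ _ _ h, h]

lemma trace_ptrace (i : Fin n) (X : Mat d n) : (ptrace i X).trace = X.trace := by
  simp only [Matrix.trace, Matrix.diag, ptrace]
  rw [Finset.sum_comm, ← Fintype.sum_prod_type',
    ← (Equiv.funSplitAt i (Fin d)).symm.sum_comp (fun a => X a a)]
  simp [funSplitAt_symm_apply]

lemma ptrace_sub (i : Fin n) (A B : Mat d n) : ptrace i (A - B) = ptrace i A - ptrace i B := by
  ext a b
  simp [ptrace, Finset.sum_sub_distrib]

def applyAtₗ (i : Fin n) (φ : Matrix (Fin d) (Fin d) ℂ →ₗ[ℂ] Matrix (Fin d) (Fin d) ℂ) :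
    Mat d n →ₗ[ℂ] Mat d n where
  toFun := applyAt i φ
  map_add' X Y := by
    ext a b
    exact congr_fun₂ (map_add φ (fun s t => X (Function.update a i s) (Function.update b i t))
      (fun s t => Y (Function.update a i s) (Function.update b i t))) (a i) (b i)
  map_smul' c X := by
    ext a b
    exact congr_fun₂ (map_smul φ c (fun s t => X (Function.update a i s)
      (Function.update b i t))) (a i) (b i)

lemma applyAtₗ_apply (i : Fin n) (φ : Matrix (Fin d) (Fin d) ℂ →ₗ[ℂ] Matrix (Fin d) (Fin d) ℂ)
    (X : Mat d n) : applyAtₗ i φ X = applyAt i φ X := rfl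

lemma ptrace_applyAt_self (i : Fin n) {φ : Matrix (Fin d) (Fin d) ℂ → Matrix (Fin d) (Fin d) ℂ}
    (hφ : ∀ M, (φ M).trace = M.trace) (X : Mat d n) :
    ptrace i (applyAt i φ X) = ptrace i X := by
  ext a b
  simp only [ptrace, applyAt, update_ins, ins_self]
  exact hφ _

lemma trace_applyAt (i : Fin n) {φ : Matrix (Fin d) (Fin d) ℂ → Matrix (Fin d) (Fin d) ℂ}
    (hφ : ∀ M, (φ M).trace = M.trace) (X : Mat d n) :
    (applyAt i φ X).trace = X.trace := by
  rw [← trace_ptrace i, ptrace_applyAt_self i hφ, trace_ptrace]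

lemma ptrace_applyAt_of_ne {i j : Fin n} (hij : i ≠ j)
    (φ : Matrix (Fin d) (Fin d) ℂ →ₗ[ℂ] Matrix (Fin d) (Fin d) ℂ) {X : Mat d n}
    (hX : ptrace j X = 0) : ptrace j (applyAt i φ X) = 0 := by
  ext a b
  set M : Fin d → Matrix (Fin d) (Fin d) ℂ := fun s u v =>
    X (ins j (Function.update a ⟨i, hij⟩ u) s) (ins j (Function.update b ⟨i, hij⟩ v) s)
  have hM : ∑ s, M s = 0 := by
    ext u v
    rw [Matrix.sum_apply]
    exact congr_fun₂ hX _ _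
  calc ptrace j (applyAt i φ X) a b = ∑ s, φ (M s) (a ⟨i, hij⟩) (b ⟨i, hij⟩) := by
        simp [ptrace, applyAt, update_ins_of_ne hij, ins_of_ne _ _ _ hij, M]
    _ = φ (∑ s, M s) (a ⟨i, hij⟩) (b ⟨i, hij⟩) := by
        rw [map_sum, Matrix.sum_apply]
    _ = 0 := by simp [hM]

lemma applyAt_applyAt (i : Fin n) (φ ψ : Matrix (Fin d) (Fin d) ℂ → Matrix (Fin d) (Fin d) ℂ)
    (X : Mat d n) : applyAt i φ (applyAt i ψ X) = applyAt i (fun M => φ (ψ M)) X := by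
  ext a b
  simp [applyAt]

lemma applyAt_id (i : Fin n) (X : Mat d n) : applyAt i (fun M => M) X = X := by
  ext a b
  simp [applyAt]

section Channel

variable {φ : Matrix (Fin d) (Fin d) ℂ →ₗ[ℂ] Matrix (Fin d) (Fin d) ℂ}

lemma applyAt_posSemidef (i : Fin n) (hφ : IsCPTP φ) {X : Mat d n} (hX : X.PosSemidef) :
    (applyAt i φ X).PosSemidef := by
  set f := (Equiv.funSplitAt i (Fin d)).trans
    ((Equiv.refl (Fin d)).prodCongr (Fintype.equivFin _))
  have h : applyAt i φ X =
      (extendMap (fun M => φ M) (X.submatrix f.symm f.symm)).submatrix f f := by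
    ext a b
    simp [f, applyAt, extendMap, funSplitAt_symm_apply, ins_restrict]
  rw [h]
  exact (hφ.1 _ _ (hX.submatrix _)).submatrix _

lemma applyAt_isHermitian (i : Fin n) (hφ : IsCPTP φ) {X : Mat d n} (hX : X.IsHermitian) :
    (applyAt i φ X).IsHermitian := by
  obtain ⟨P, Q, hP, hQ, rfl, -⟩ := exists_posSemidef_sub_eq_of_isHermitian hX
  rw [← applyAtₗ_apply, map_sub]
  exact (applyAt_posSemidef i hφ hP).1.sub (applyAt_posSemidef i hφ hQ).1

lemma traceNorm_applyAt_le (i : Fin n) (hφ : IsCPTP φ) {X : Mat d n} (hX : X.IsHermitian) :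
    traceNorm (applyAt i φ X) ≤ traceNorm X := by
  obtain ⟨P, Q, hP, hQ, rfl, hPQ⟩ := exists_posSemidef_sub_eq_of_isHermitian hX
  calc traceNorm (applyAt i φ (P - Q)) = traceNorm (applyAt i φ P - applyAt i φ Q) := by
        rw [← applyAtₗ_apply, map_sub]; rfl
    _ ≤ (applyAt i φ P + applyAt i φ Q).trace.re :=
        traceNorm_sub_le (applyAt_posSemidef i hφ hP) (applyAt_posSemidef i hφ hQ)
    _ = traceNorm (P - Q) := by
        rw [hPQ, ← applyAtₗ_apply, ← applyAtₗ_apply, ← map_add, applyAtₗ_apply,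
          trace_applyAt i hφ.2]

end Channel

end Qudits

section Decomposition

variable {d n : ℕ}

lemma sum_sum_update {ι α M : Type} [Fintype ι] [DecidableEq ι] [Fintype α] [AddCommMonoid M]
    (i : ι) (F : (ι → α) → M) :
    ∑ t : α, ∑ s : ι → α, F (Function.update s i t) = Fintype.card α • ∑ s, F s := by
  let e := (Equiv.funSplitAt i α).symm
  simp_rw [← e.sum_comp, Fintype.sum_prod_type]
  have h (t u : α) (r : {j // j ≠ i} → α) : Function.update (e (u, r)) i t = e (t, r) := by
    ext j; by_cases hj : j = i <;> simp [e, Equiv.funSplitAt, Equiv.piSplitAt, hj]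
  simp [h, Finset.card_univ, Finset.smul_sum]

def spliceBelow (k : ℕ) (s a : Cfg d n) : Cfg d n := fun j => if (j : ℕ) < k then s j else a j

lemma spliceBelow_update (i : Fin n) (s : Cfg d n) (t : Fin d) (c : Cfg d n) :
    spliceBelow i s (Function.update c i t) = spliceBelow (i + 1) (Function.update s i t) c := by
  ext j
  rcases lt_trichotomy (j : ℕ) i with h | h | h
  · simp only [spliceBelow, h, Nat.lt_succ_of_lt h, if_true, Function.update_of_ne (Fin.ne_of_lt h)]
  · simp [spliceBelow, Fin.ext h]
  · simp [spliceBelow, Nat.not_lt.mpr h.le, Nat.not_lt.mpr (Nat.succ_le_of_lt h),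
      (Fin.ne_of_lt h).symm]

def depolarize (M : Matrix (Fin d) (Fin d) ℂ) : Matrix (Fin d) (Fin d) ℂ := (M.trace / d) • 1

lemma trace_depolarize (hd : d ≠ 0) (M : Matrix (Fin d) (Fin d) ℂ) :
    (depolarize M).trace = M.trace := by
  simp [depolarize, hd]

/-- `(I/d)^{⊗k} ⊗ Tr_{<k} X`; the factor `d⁻ⁿ` rather than `d⁻ᵏ` because the sum runs over
full configurations `s`, of which only the first `k` coordinates are used. -/
def depolarizeBelow (X : Mat d n) (k : ℕ) : Mat d n := fun a b =>
  if ∀ j : Fin n, (j : ℕ) < k → a j = b j then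
    ((d : ℂ) ^ n)⁻¹ * ∑ s, X (spliceBelow k s a) (spliceBelow k s b)
  else 0

lemma depolarizeBelow_zero (hd : d ≠ 0) (X : Mat d n) : depolarizeBelow X 0 = X := by
  ext a b
  have h (s c : Cfg d n) : spliceBelow 0 s c = c := funext fun j => if_neg (Nat.not_lt_zero _)
  simp [depolarizeBelow, h, Finset.card_univ, hd]

lemma depolarizeBelow_eq_zero (X : Mat d n) (hX : X.trace = 0) : depolarizeBelow X n = 0 := by
  ext a b
  have h (s c : Cfg d n) : spliceBelow n s c = s := funext fun j => if_pos j.isLt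
  simp only [depolarizeBelow, h]
  rw [show ∑ s, X s s = X.trace from rfl, hX]
  simp

lemma depolarizeBelow_isHermitian {X : Mat d n} (hX : X.IsHermitian) (k : ℕ) :
    (depolarizeBelow X k).IsHermitian := by
  ext a b
  have hsymm : (∀ j : Fin n, (j : ℕ) < k → b j = a j) ↔ ∀ j : Fin n, (j : ℕ) < k → a j = b j :=
    forall_congr' fun j => imp_congr_right fun _ => eq_comm
  simp only [Matrix.conjTranspose_apply, depolarizeBelow, hsymm]
  split_ifs <;> simp [star_sum, hX.apply]

lemma depolarizeBelow_succ (hd : d ≠ 0) (X : Mat d n) (i : Fin n) :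
    depolarizeBelow X (i + 1) = applyAt i depolarize (depolarizeBelow X i) := by
  ext a b
  have hagree (t : Fin d) : (∀ j : Fin n, (j : ℕ) < i →
      Function.update a i t j = Function.update b i t j) ↔ ∀ j : Fin n, (j : ℕ) < i → a j = b j :=
    forall_congr' fun j => imp_congr_right fun h => by simp [Fin.ne_of_lt h]
  have hagree_succ : (∀ j : Fin n, (j : ℕ) < i + 1 → a j = b j) ↔
      (∀ j : Fin n, (j : ℕ) < i → a j = b j) ∧ a i = b i := by
    refine ⟨fun h => ⟨fun j hj => h j (Nat.lt_succ_of_lt hj), h i (Nat.lt_succ_self _)⟩,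
      fun ⟨h, hi⟩ j hj => ?_⟩
    rcases Nat.lt_succ_iff_lt_or_eq.mp hj with hj | hj
    exacts [h j hj, Fin.ext hj ▸ hi]
  simp only [applyAt, depolarize, depolarizeBelow, hagree, hagree_succ, spliceBelow_update,
    Matrix.trace, Matrix.diag, Matrix.smul_apply, Matrix.one_apply]
  by_cases hbelow : ∀ j : Fin n, (j : ℕ) < i → a j = b j
  · by_cases hi : a i = b i
    · rw [if_pos ⟨hbelow, hi⟩, if_pos hi]
      simp only [if_pos hbelow, ← Finset.mul_sum, smul_eq_mul, mul_one, nsmul_eq_mul,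
        sum_sum_update i fun s => X (spliceBelow (i + 1) s a) (spliceBelow (i + 1) s b),
        Fintype.card_fin]
      field_simp
    · rw [if_neg fun h => hi h.2, if_neg hi, smul_zero]
  · simp only [if_neg hbelow, if_neg fun h : _ ∧ _ => hbelow h.1]
    simp

end Decomposition

section W1

variable {d n : ℕ}

lemma W1Set_nonempty (hd : d ≠ 0) {X : Mat d n} (hX : X.IsHermitian) (hXtr : X.trace = 0) :
    (W1Set X).Nonempty := by
  refine ⟨_, fun i => depolarizeBelow X i - depolarizeBelow X (i + 1),
    fun i => (depolarizeBelow_isHermitian hX _).sub (depolarizeBelow_isHermitian hX _),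
    fun i => ?_, ?_, rfl⟩
  · rw [ptrace_sub, depolarizeBelow_succ hd, ptrace_applyAt_self i (trace_depolarize hd),
      sub_self]
  · rw [Fin.sum_univ_eq_sum_range (fun k => depolarizeBelow X k - depolarizeBelow X (k + 1)),
      Finset.sum_range_sub', depolarizeBelow_zero hd, depolarizeBelow_eq_zero X hXtr, sub_zero]

lemma nonneg_of_mem_W1Set {X : Mat d n} {r : ℝ} (hr : r ∈ W1Set X) : 0 ≤ r := by
  obtain ⟨Y, -, -, -, rfl⟩ := hr
  have := Finset.sum_nonneg fun i (_ : i ∈ Finset.univ) => traceNorm_nonneg (Y i)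
  positivity

lemma W1_applyAt_le (hd : d ≠ 0) (i : Fin n)
    {φ : Matrix (Fin d) (Fin d) ℂ →ₗ[ℂ] Matrix (Fin d) (Fin d) ℂ} (hφ : IsCPTP φ)
    {X : Mat d n} (hX : X.IsHermitian) (hXtr : X.trace = 0) :
    W1 (applyAt i φ X) ≤ W1 X := by
  refine le_csInf (W1Set_nonempty hd hX hXtr) ?_
  rintro _ ⟨Y, hY, hYtr, rfl, rfl⟩
  have hmem :
      (1 / 2) * ∑ j, traceNorm (applyAt i φ (Y j)) ∈ W1Set (applyAt i φ (∑ j, Y j)) := by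
    refine ⟨fun j => applyAt i φ (Y j), fun j => applyAt_isHermitian i hφ (hY j), fun j => ?_,
      by simp only [← applyAtₗ_apply, map_sum], rfl⟩
    rcases eq_or_ne i j with rfl | hij
    · rw [ptrace_applyAt_self i hφ.2, hYtr]
    · exact ptrace_applyAt_of_ne hij φ (hYtr j)
  refine (csInf_le ⟨0, fun r => nonneg_of_mem_W1Set⟩ hmem).trans ?_
  gcongr with j
  exact traceNorm_applyAt_le i hφ (hY j)

lemma W1_applyAt_eq_of_leftInverse (hd : d ≠ 0) (i : Fin n)
    {φ ψ : Matrix (Fin d) (Fin d) ℂ →ₗ[ℂ] Matrix (Fin d) (Fin d) ℂ} (hφ : IsCPTP φ)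
    (hψ : IsCPTP ψ) (hψφ : ∀ M, ψ (φ M) = M) {X : Mat d n} (hX : X.IsHermitian)
    (hXtr : X.trace = 0) : W1 (applyAt i φ X) = W1 X := by
  refine le_antisymm (W1_applyAt_le hd i hφ hX hXtr) ?_
  have h := W1_applyAt_le hd i hψ (applyAt_isHermitian i hφ hX)
    (by rw [trace_applyAt i hφ.2, hXtr])
  rwa [applyAt_applyAt, funext hψφ, applyAt_id] at h

end W1

section UnitaryConj

open scoped Kronecker Matrix

lemma extendMap_mul_mul_conjTranspose {A R : Type} [Fintype A] [Fintype R] [DecidableEq R]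
    (C : Matrix A A ℂ) (M : Matrix (A × R) (A × R) ℂ) :
    extendMap (fun N => C * N * Cᴴ) M = (C ⊗ₖ (1 : Matrix R R ℂ)) * M * (C ⊗ₖ 1)ᴴ := by
  ext p q
  change (C * Matrix.of (fun a a' => M (a, p.2) (a', q.2)) * Cᴴ) p.1 q.1 = _
  simp [Matrix.mul_apply, Matrix.one_apply, Matrix.conjTranspose_kronecker,
    Fintype.sum_prod_type, Finset.sum_mul, mul_assoc]

variable {d : ℕ}

def unitaryConj (U : Matrix (Fin d) (Fin d) ℂ) :
    Matrix (Fin d) (Fin d) ℂ →ₗ[ℂ] Matrix (Fin d) (Fin d) ℂ where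
  toFun M := U * M * star U
  map_add' M N := by simp [Matrix.mul_add, Matrix.add_mul]
  map_smul' c M := by simp

lemma unitaryConj_apply (U M : Matrix (Fin d) (Fin d) ℂ) : unitaryConj U M = U * M * star U := rfl

lemma isCPTP_unitaryConj {U : Matrix (Fin d) (Fin d) ℂ}
    (hU : U ∈ Matrix.unitaryGroup (Fin d) ℂ) : IsCPTP (unitaryConj U) := by
  refine ⟨fun k M hM => ?_, fun M => ?_⟩
  · simp only [unitaryConj_apply, Matrix.star_eq_conjTranspose, extendMap_mul_mul_conjTranspose]
    exact hM.mul_mul_conjTranspose_same _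
  · rw [unitaryConj_apply, Matrix.trace_mul_cycle, Matrix.mem_unitaryGroup_iff'.mp hU,
      Matrix.one_mul]

lemma unitaryConj_star_unitaryConj {U : Matrix (Fin d) (Fin d) ℂ}
    (hU : U ∈ Matrix.unitaryGroup (Fin d) ℂ) (M : Matrix (Fin d) (Fin d) ℂ) :
    unitaryConj (star U) (unitaryConj U M) = M := by
  have h := Matrix.mem_unitaryGroup_iff'.mp hU
  rw [unitaryConj_apply, unitaryConj_apply, star_star]
  simp only [← Matrix.mul_assoc, h, Matrix.one_mul]
  rw [Matrix.mul_assoc, h, Matrix.mul_one]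

end UnitaryConj

section Permutation

variable {d n : ℕ}

lemma permuteMat_eq_submatrix (π : Equiv.Perm (Fin n)) (X : Mat d n) :
    permuteMat π X = X.submatrix (π.symm.arrowCongr (Equiv.refl (Fin d)))
      (π.symm.arrowCongr (Equiv.refl (Fin d))) := rfl

lemma permuteMat_sum {m : ℕ} (π : Equiv.Perm (Fin n)) (Y : Fin m → Mat d n) :
    permuteMat π (∑ j, Y j) = ∑ j, permuteMat π (Y j) := by
  ext a b
  simp [permuteMat, Matrix.sum_apply]

lemma permuteMat_symm_permuteMat (π : Equiv.Perm (Fin n)) (X : Mat d n) :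
    permuteMat π.symm (permuteMat π X) = X := by
  ext a b
  simp [permuteMat, Function.comp_assoc]

lemma ins_comp_perm (π : Equiv.Perm (Fin n)) (j : Fin n) (c : {k : Fin n // k ≠ j} → Fin d)
    (s : Fin d) :
    ins j c s ∘ π =
      ins (π.symm j) (fun k => c ⟨π k, fun h => k.2 (π.eq_symm_apply.mpr h)⟩) s := by
  ext k
  by_cases hk : k = π.symm j
  · subst hk; simp
  · have : π k ≠ j := fun h => hk (π.eq_symm_apply.mpr h)
    simp [ins_of_ne _ _ _ hk, ins_of_ne _ _ _ this]

lemma ptrace_permuteMat_eq_zero (π : Equiv.Perm (Fin n)) (j : Fin n) {Z : Mat d n}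
    (hZ : ptrace (π.symm j) Z = 0) : ptrace j (permuteMat π Z) = 0 := by
  ext a b
  simp only [ptrace, permuteMat, ins_comp_perm]
  exact congr_fun₂ hZ _ _

lemma W1Set_subset_W1Set_permuteMat (π : Equiv.Perm (Fin n)) (X : Mat d n) :
    W1Set X ⊆ W1Set (permuteMat π X) := by
  rintro _ ⟨Y, hY, hYtr, rfl, rfl⟩
  refine ⟨fun j => permuteMat π (Y (π.symm j)),
    fun j => (hY (π.symm j)).submatrix _,
    fun j => ptrace_permuteMat_eq_zero π j (hYtr _), ?_, ?_⟩
  · rw [permuteMat_sum]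
    exact (π.symm.sum_comp fun j => permuteMat π (Y j)).symm
  · simp only [permuteMat_eq_submatrix, traceNorm_submatrix]
    rw [π.symm.sum_comp fun j => traceNorm (Y j)]

lemma W1_permuteMat (π : Equiv.Perm (Fin n)) (X : Mat d n) : W1 (permuteMat π X) = W1 X := by
  have h := W1Set_subset_W1Set_permuteMat π.symm (permuteMat π X)
  rw [permuteMat_symm_permuteMat] at h
  exact congrArg sInf (h.antisymm (W1Set_subset_W1Set_permuteMat π X))

end Permutation

theorem stmt0_general {d n : ℕ} (hd : 2 ≤ d) (i : Fin n)
    (φ : Matrix (Fin d) (Fin d) ℂ →ₗ[ℂ] Matrix (Fin d) (Fin d) ℂ) (hφ : IsCPTP φ)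
    (X : Mat d n) (hX : X.IsHermitian) (hXtr : X.trace = 0) :
    W1 (applyAt i (fun M => φ M) X) ≤ W1 X ∧
    ((∃ U : Matrix (Fin d) (Fin d) ℂ, U ∈ Matrix.unitaryGroup (Fin d) ℂ ∧
        ∀ M, φ M = U * M * star U) → W1 (applyAt i (fun M => φ M) X) = W1 X) ∧
    ∀ π : Equiv.Perm (Fin n), W1 (permuteMat π X) = W1 X := by
  have hd0 : d ≠ 0 := by omega
  refine ⟨W1_applyAt_le hd0 i hφ hX hXtr, ?_, fun π => W1_permuteMat π X⟩
  rintro ⟨U, hU, hφU⟩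
  refine W1_applyAt_eq_of_leftInverse hd0 i hφ (isCPTP_unitaryConj (Unitary.star_mem hU))
    (fun M => ?_) hX hXtr
  rw [hφU, ← unitaryConj_apply, unitaryConj_star_unitaryConj hU]

theorem stmt0 {d n : ℕ} (hd : 2 ≤ d) (hn : 1 ≤ n) (i : Fin n)
    (φ : Matrix (Fin d) (Fin d) ℂ →ₗ[ℂ] Matrix (Fin d) (Fin d) ℂ) (hφ : IsCPTP φ)
    (X : Mat d n) (hX : X.IsHermitian) (hXtr : X.trace = 0) :
    W1 (applyAt i (fun M => φ M) X) ≤ W1 X ∧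
    ((∃ U : Matrix (Fin d) (Fin d) ℂ, U ∈ Matrix.unitaryGroup (Fin d) ℂ ∧
        ∀ M, φ M = U * M * star U) → W1 (applyAt i (fun M => φ M) X) = W1 X) ∧
    ∀ π : Equiv.Perm (Fin n), W1 (permuteMat π X) = W1 X :=
  stmt0_general hd i φ hφ X hX hXtr

end QW1
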